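/- If the Markov chain (M_n) with transition function ρ is started with M_0 ∼ Q_A, where Q_A is a probability measure on [0,A] invariant for the conditioned kernel (i.e. Q_A([0,x]) · ∫ ρ(s,A) dQ_A(s) = ∫ ρ(s,x) dQ_A(s) for all x ∈ [0,A]), then T_A^{Q_A} = min{ n ≥ 1 : M_n > A } is geometrically distributed: P(T_A^{Q_A} > n) = β^n for all n ≥ 0, where β = ∫_0^A ρ(s,A) dQ_A(s); consequently, if β < 1, then E[T_A^{Q_A}] = 1/(1 − β). -/

import Mathlib

/-!
Let `ν_n` be the law of `M_n` on the event that the chain has stayed in `(-∞, A]` up to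
time `n` (`killedLaw`), so that `P(T > n) = ν_n(ℝ)`. The Markov property gives
`ν_{n+1}((-∞, x]) = ∫ ρ(s, min x A) dν_n(s)`, and the invariance of `Q` says precisely that
this operation sends `Q` to `β • Q`. Hence `ν_n = β ^ n • Q`, so `P(T > n) = β ^ n`, and
`E T = ∑ P(T > n) = 1 / (1 - β)`.
-/

open MeasureTheory Set
open scoped ENNReal

/-- The first time after time `0` that the process `M` exceeds the level `A`
(`∞` if this never happens), as an extended nonnegative real. -/
noncomputable def hitTime {Ω : Type*} (M : ℕ → Ω → ℝ) (A : ℝ) (ω : Ω) : ℝ≥0∞ :=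
  ⨅ n ∈ {n : ℕ | 1 ≤ n ∧ A < M n ω}, (n : ℝ≥0∞)

theorem ENat.tsum_ite_natCast_lt (a : ℕ∞) :
    ∑' n : ℕ, (if (n : ℝ≥0∞) < a then (1 : ℝ≥0∞) else 0) = a := by
  induction a using ENat.recTopCoe with
  | top => simp
  | coe m =>
    rw [tsum_eq_sum (s := Finset.range m) (fun n hn => by simp_all)]
    simp [Finset.sum_ite_of_true (fun n hn => Finset.mem_range.mp hn)]

theorem lintegral_eq_tsum_measure_natCast_lt {Ω : Type*} [MeasurableSpace Ω]
    {P : Measure Ω} {T : Ω → ℝ≥0∞} (hT : ∀ ω, ∃ a : ℕ∞, T ω = a)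
    (hmeas : ∀ n : ℕ, MeasurableSet {ω | (n : ℝ≥0∞) < T ω}) :
    ∫⁻ ω, T ω ∂P = ∑' n : ℕ, P {ω | (n : ℝ≥0∞) < T ω} := by
  have hT_sum : ∀ ω, T ω = ∑' n : ℕ, {ω | (n : ℝ≥0∞) < T ω}.indicator 1 ω := fun ω => by
    obtain ⟨a, ha⟩ := hT ω
    simp only [indicator_apply, mem_ofPred_eq, Pi.one_apply, ha, ENat.tsum_ite_natCast_lt]
  rw [lintegral_congr hT_sum,
    lintegral_tsum fun n => (measurable_one.indicator (hmeas n)).aemeasurable]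
  simp_rw [lintegral_indicator_one (hmeas _)]

theorem measureReal_preimage_Iic_inter_eq_setIntegral {Ω : Type*} {m mΩ : MeasurableSpace Ω}
    {P : Measure[mΩ] Ω} [IsFiniteMeasure P] (hm : m ≤ mΩ) {X : Ω → ℝ} (hX : Measurable X)
    {y : ℝ} {g : Ω → ℝ}
    (hg : P[fun ω => (Iic y).indicator (fun _ => (1 : ℝ)) (X ω) | m] =ᵐ[P] g)
    {S : Set Ω} (hS : MeasurableSet[m] S) :
    P.real (X ⁻¹' Iic y ∩ S) = ∫ ω in S, g ω ∂P := by
  have hXy : MeasurableSet (X ⁻¹' Iic y) := hX measurableSet_Iic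
  have hind : (fun ω => (Iic y).indicator (fun _ => (1 : ℝ)) (X ω))
      = (X ⁻¹' Iic y).indicator 1 := funext fun ω => (indicator_comp_right X).symm
  calc P.real (X ⁻¹' Iic y ∩ S) = ∫ ω in S, (X ⁻¹' Iic y).indicator 1 ω ∂P := by
        rw [integral_indicator_one hXy, measureReal_restrict_apply hXy]
    _ = ∫ ω in S, (P[(X ⁻¹' Iic y).indicator 1 | m]) ω ∂P :=
        (setIntegral_condExp hm ((integrable_const 1).indicator hXy) hS).symm
    _ = ∫ ω in S, g ω ∂P := setIntegral_congr_ae (hm S hS) (by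
        filter_upwards [hg] with ω hω _
        rwa [← hind])

section KilledChain

variable {Ω : Type*}

abbrev pastMeasurableSpace (M : ℕ → Ω → ℝ) (n : ℕ) : MeasurableSpace Ω :=
  ⨆ i ∈ Finset.range (n + 1), MeasurableSpace.comap (M i) Real.measurableSpace

def survivalSet (M : ℕ → Ω → ℝ) (A : ℝ) (n : ℕ) : Set Ω :=
  {ω | ∀ k ∈ Finset.Icc 1 n, M k ω ≤ A}

variable {M : ℕ → Ω → ℝ} {A : ℝ}

theorem measurableSet_survivalSet (n : ℕ) :
    MeasurableSet[pastMeasurableSpace M n] (survivalSet M A n) := by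
  have hbiInter : survivalSet M A n = ⋂ k ∈ Finset.Icc 1 n, M k ⁻¹' Iic A := by
    ext ω; simp [survivalSet]
  rw [hbiInter]
  refine Finset.measurableSet_biInter _ fun k hk => ?_
  refine le_iSup₂ (f := fun i (_ : i ∈ Finset.range (n + 1)) =>
    MeasurableSpace.comap (M i) Real.measurableSpace) k ?_ _ ⟨Iic A, measurableSet_Iic, rfl⟩
  simp only [Finset.mem_Icc, Finset.mem_range] at hk ⊢
  omega

theorem survivalSet_zero : survivalSet M A 0 = univ := by
  ext ω; simp [survivalSet]

theorem survivalSet_succ (n : ℕ) :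
    survivalSet M A (n + 1) = survivalSet M A n ∩ M (n + 1) ⁻¹' Iic A := by
  ext ω
  simp only [survivalSet, Finset.mem_Icc, mem_inter_iff, mem_ofPred_eq, mem_preimage, mem_Iic]
  constructor
  · intro h
    exact ⟨fun k hk => h k ⟨hk.1, by omega⟩, h (n + 1) ⟨by omega, le_rfl⟩⟩
  · rintro ⟨h, hn⟩ k ⟨hk1, hk⟩
    rcases hk.lt_or_eq with hk | rfl
    exacts [h k ⟨hk1, by omega⟩, hn]

theorem natCast_lt_hitTime_iff {n : ℕ} {ω : Ω} :
    (n : ℝ≥0∞) < hitTime M A ω ↔ ω ∈ survivalSet M A n := by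
  constructor
  · intro h k hk
    by_contra! hAk
    have : hitTime M A ω ≤ k := iInf₂_le k ⟨(Finset.mem_Icc.mp hk).1, hAk⟩
    exact absurd (h.trans_le this) (by simpa using (Finset.mem_Icc.mp hk).2)
  · intro h
    refine (ENNReal.lt_add_right (ENNReal.natCast_ne_top n) one_ne_zero).trans_le
      (le_iInf₂ fun k ⟨hk1, hAk⟩ => ?_)
    have : n < k := by
      by_contra! hkn
      exact (h k (Finset.mem_Icc.mpr ⟨hk1, hkn⟩)).not_gt hAk
    exact_mod_cast this

theorem exists_hitTime_eq_coe (ω : Ω) : ∃ a : ℕ∞, hitTime M A ω = a := by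
  rcases eq_empty_or_nonempty {n : ℕ | 1 ≤ n ∧ A < M n ω} with h | h
  · exact ⟨⊤, by simp [hitTime, h]⟩
  · refine ⟨(sInf {n : ℕ | 1 ≤ n ∧ A < M n ω} : ℕ), le_antisymm ?_ ?_⟩
    · exact iInf₂_le _ (Nat.sInf_mem h)
    · exact le_iInf₂ fun k hk => by simpa using Nat.sInf_le hk

variable [MeasurableSpace Ω]

theorem pastMeasurableSpace_le (hM : ∀ n, Measurable (M n)) (n : ℕ) :
    pastMeasurableSpace M n ≤ ‹MeasurableSpace Ω› :=
  iSup₂_le fun i _ => (hM i).comap_le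

noncomputable def killedLaw (P : Measure Ω) (M : ℕ → Ω → ℝ) (A : ℝ) (n : ℕ) : Measure ℝ :=
  (P.restrict (survivalSet M A n)).map (M n)

variable {P : Measure Ω} {ρ : ℝ → ℝ → ℝ}

instance [IsFiniteMeasure P] (n : ℕ) : IsFiniteMeasure (killedLaw P M A n) := by
  unfold killedLaw; infer_instance

theorem killedLaw_apply_univ (hM : ∀ n, Measurable (M n)) (n : ℕ) :
    killedLaw P M A n univ = P (survivalSet M A n) := by
  rw [killedLaw, Measure.map_apply (hM n) MeasurableSet.univ, preimage_univ,
    Measure.restrict_apply_univ]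

theorem killedLaw_succ_real_Iic [IsFiniteMeasure P] (hM : ∀ n, Measurable (M n))
    {n : ℕ} {x : ℝ}
    (hρ : Measurable fun s => ρ s (min x A))
    (hMarkov : P[fun ω => (Iic (min x A)).indicator (fun _ => (1 : ℝ)) (M (n + 1) ω) |
      pastMeasurableSpace M n] =ᵐ[P] fun ω => ρ (M n ω) (min x A)) :
    (killedLaw P M A (n + 1)).real (Iic x) = ∫ s, ρ s (min x A) ∂killedLaw P M A n := by
  have hpre : M (n + 1) ⁻¹' Iic x ∩ survivalSet M A (n + 1)
      = M (n + 1) ⁻¹' Iic (min x A) ∩ survivalSet M A n := by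
    rw [survivalSet_succ]
    ext ω
    simp only [mem_inter_iff, mem_preimage, mem_Iic, le_min_iff]
    tauto
  calc (killedLaw P M A (n + 1)).real (Iic x)
      = P.real (M (n + 1) ⁻¹' Iic (min x A) ∩ survivalSet M A n) := by
        rw [killedLaw, map_measureReal_apply (hM _) measurableSet_Iic,
          measureReal_restrict_apply (hM _ measurableSet_Iic), hpre]
    _ = ∫ ω in survivalSet M A n, ρ (M n ω) (min x A) ∂P :=
        measureReal_preimage_Iic_inter_eq_setIntegral (pastMeasurableSpace_le hM n) (hM _)
          hMarkov (measurableSet_survivalSet n)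
    _ = ∫ s, ρ s (min x A) ∂killedLaw P M A n :=
        (integral_map (hM n).aemeasurable hρ.aestronglyMeasurable).symm

theorem killedLaw_eq_smul [IsFiniteMeasure P] (hM : ∀ n, Measurable (M n))
    (hρ : ∀ x, Measurable fun s => ρ s x)
    (hMarkov : ∀ n x, P[fun ω => (Iic x).indicator (fun _ => (1 : ℝ)) (M (n + 1) ω) |
      pastMeasurableSpace M n] =ᵐ[P] fun ω => ρ (M n ω) x)
    {Q : Measure ℝ} [IsFiniteMeasure Q] (hM0 : P.map (M 0) = Q) {β : ℝ} (hβ : 0 ≤ β)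
    (hQ : ∀ x, ∫ s, ρ s (min x A) ∂Q = β * Q.real (Iic x)) (n : ℕ) :
    killedLaw P M A n = ENNReal.ofReal β ^ n • Q := by
  induction n with
  | zero => rw [killedLaw, survivalSet_zero, Measure.restrict_univ, pow_zero, one_smul, hM0]
  | succ n ih =>
    have hfin (x : ℝ) : (ENNReal.ofReal β ^ (n + 1) • Q) (Iic x) ≠ ∞ :=
      ENNReal.mul_ne_top (ENNReal.pow_ne_top ENNReal.ofReal_ne_top) (measure_ne_top _ _)
    refine Measure.ext_of_Iic _ _ fun x =>
      (measureReal_eq_measureReal_iff (h₂ := hfin x)).mp ?_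
    rw [killedLaw_succ_real_Iic hM (hρ _) (hMarkov n _), ih, integral_smul_measure, hQ]
    simp only [measureReal_ennreal_smul_apply, ENNReal.toReal_pow, ENNReal.toReal_ofReal hβ,
      smul_eq_mul]
    ring

end KilledChain

theorem integral_min_eq_mul_measureReal_Iic {K : ℝ → Measure ℝ} {ρ : ℝ → ℝ → ℝ}
    (hKsupp : ∀ t, K t (Iio 0) = 0) (hρK : ∀ t x, 0 ≤ t → (K t (Iic x)).toReal = ρ t x)
    {A : ℝ} (hA : 0 ≤ A) {Q : Measure ℝ} (hQsupp : Q (Icc 0 A)ᶜ = 0)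
    (hInv : ∀ x ∈ Icc 0 A, (Q (Iic x)).toReal * ∫ s, ρ s A ∂Q = ∫ s, ρ s x ∂Q) (x : ℝ) :
    ∫ s, ρ s (min x A) ∂Q = (∫ s, ρ s A ∂Q) * Q.real (Iic x) := by
  rcases le_or_gt 0 x with hx | hx
  · have hIic : Q (Iic (min x A)) = Q (Iic x) := by
      rw [← measure_inter_conull hQsupp, ← measure_inter_conull (s := Iic x) hQsupp]
      congr 1
      ext s
      simp only [mem_inter_iff, mem_Iic, mem_Icc, le_min_iff]
      tauto
    rw [← hInv _ ⟨le_min hx hA, min_le_right x A⟩, hIic, measureReal_def, mul_comm]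
  · have hIic_null : Q (Iic x) = 0 :=
      measure_mono_null (t := (Icc 0 A)ᶜ)
        (fun s (hs : s ≤ x) hs' => (hs.trans_lt hx).not_ge hs'.1) hQsupp
    rw [measureReal_def, hIic_null, ENNReal.toReal_zero, mul_zero]
    refine integral_eq_zero_of_ae ?_
    filter_upwards [mem_ae_iff.mpr hQsupp] with s hs
    rw [min_eq_left (hx.le.trans hA), ← hρK s x hs.1,
      measure_mono_null (Iic_subset_Iio.mpr hx) (hKsupp s), ENNReal.toReal_zero, Pi.zero_apply]

theorem exit_time_geometric_from_invariant_initial_law_general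
    (ρ : ℝ → ℝ → ℝ)
    (K : ℝ → Measure ℝ)
    (hKsupp : ∀ t : ℝ, K t (Set.Iio (0 : ℝ)) = 0)
    (hρK : ∀ t x : ℝ, 0 ≤ t → (K t (Set.Iic x)).toReal = ρ t x)
    (hρmeas : ∀ x : ℝ, Measurable fun s : ℝ => ρ s x)
    (A : ℝ) (hA : 0 < A)
    -- the initial law `Q`: a probability measure on `[0,A]`, invariant for the
    -- conditioned kernel
    (Q : Measure ℝ) (hQprob : IsProbabilityMeasure Q)
    (hQsupp : Q (Set.Icc (0 : ℝ) A)ᶜ = 0)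
    (hInv : ∀ x ∈ Set.Icc (0 : ℝ) A,
      (Q (Set.Iic x)).toReal * ∫ s, ρ s A ∂Q = ∫ s, ρ s x ∂Q)
    -- the Markov chain `(M_n)` with transition function `ρ` and `M_0 ∼ Q`
    (Ω : Type*) [MeasurableSpace Ω] (P : Measure Ω) (hP : IsProbabilityMeasure P)
    (M : ℕ → Ω → ℝ)
    (hMmeas : ∀ n : ℕ, Measurable (M n))
    (hM0 : P.map (M 0) = Q)
    (hMarkov : ∀ n : ℕ, ∀ x : ℝ,
      P[fun ω => (Set.Iic x).indicator (fun _ => (1 : ℝ)) (M (n + 1) ω) |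
        ⨆ i ∈ Finset.range (n + 1), MeasurableSpace.comap (M i) Real.measurableSpace]
      =ᵐ[P] fun ω => ρ (M n ω) x)
    (β : ℝ) (hβ : β = ∫ s, ρ s A ∂Q) :
    (∀ n : ℕ, P {ω | (n : ℝ≥0∞) < hitTime M A ω} = ENNReal.ofReal (β ^ n)) ∧
      (β < 1 → ∫⁻ ω, hitTime M A ω ∂P = ENNReal.ofReal (1 / (1 - β))) := by
  have hβ0 : 0 ≤ β := hβ ▸ integral_nonneg_of_ae (by
    filter_upwards [mem_ae_iff.mpr hQsupp] with s hs
    exact (hρK s A hs.1).symm ▸ ENNReal.toReal_nonneg)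
  have hlaw := killedLaw_eq_smul hMmeas hρmeas hMarkov hM0 hβ0 fun x => by
    rw [hβ]; exact integral_min_eq_mul_measureReal_Iic hKsupp hρK hA.le hQsupp hInv x
  have hsurvive (n : ℕ) : {ω | (n : ℝ≥0∞) < hitTime M A ω} = survivalSet M A n :=
    ext fun _ => natCast_lt_hitTime_iff
  have htail (n : ℕ) : P {ω | (n : ℝ≥0∞) < hitTime M A ω} = ENNReal.ofReal (β ^ n) := by
    rw [hsurvive, ← killedLaw_apply_univ hMmeas, hlaw, Measure.smul_apply, measure_univ,
      smul_eq_mul, mul_one, ENNReal.ofReal_pow hβ0]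
  refine ⟨htail, fun hβ1 => ?_⟩
  rw [lintegral_eq_tsum_measure_natCast_lt exists_hitTime_eq_coe fun n => hsurvive n ▸
      pastMeasurableSpace_le hMmeas n _ (measurableSet_survivalSet n)]
  simp_rw [htail]
  rw [← ENNReal.ofReal_tsum_of_nonneg (pow_nonneg hβ0) (summable_geometric_of_lt_one hβ0 hβ1),
    tsum_geometric_of_lt_one hβ0 hβ1, one_div]

/-- **Geometric distribution of the first exit time started at an invariant
quasistationary law.**
Let `ρ(t,x) = K t (Iic x)` be a stationary Markov transition function on `[0,∞)`
(`K t` a probability measure on `[0,∞)` for each `t`, measurably in `t`), and let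
`A > 0` with `ρ(t,A) > 0` for `t ∈ [0,A]`.  Let `Q` be a probability measure on `[0,A]`
which is invariant for the conditioned kernel, i.e.
`Q((-∞,x]) · ∫ ρ(s,A) dQ(s) = ∫ ρ(s,x) dQ(s)` for all `x ∈ [0,A]`.
Let `(M_n)` be a Markov chain with transition function `ρ` (one-step conditional CDF
from the past is `ρ(M_n, ·)`) and `M_0 ∼ Q`, on a probability space `(Ω, P)`.
Then `T = min {n ≥ 1 | M_n > A}` is geometric: `P(T > n) = β ^ n` for all `n ≥ 0`,
where `β = ∫ ρ(s,A) dQ(s)`; consequently, if `β < 1` then `E T = 1/(1-β)`. -/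
theorem exit_time_geometric_from_invariant_initial_law
    (ρ : ℝ → ℝ → ℝ)
    (K : ℝ → Measure ℝ)
    (hKmeas : Measurable K)
    (hKprob : ∀ t : ℝ, IsProbabilityMeasure (K t))
    (hKsupp : ∀ t : ℝ, K t (Set.Iio (0 : ℝ)) = 0)
    (hρK : ∀ t x : ℝ, 0 ≤ t → (K t (Set.Iic x)).toReal = ρ t x)
    (hρmeas : ∀ x : ℝ, Measurable fun s : ℝ => ρ s x)
    (A : ℝ) (hA : 0 < A)
    (hρpos : ∀ t ∈ Set.Icc (0 : ℝ) A, 0 < ρ t A)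
    -- the initial law `Q`: a probability measure on `[0,A]`, invariant for the
    -- conditioned kernel
    (Q : Measure ℝ) (hQprob : IsProbabilityMeasure Q)
    (hQsupp : Q (Set.Icc (0 : ℝ) A)ᶜ = 0)
    (hInv : ∀ x ∈ Set.Icc (0 : ℝ) A,
      (Q (Set.Iic x)).toReal * ∫ s, ρ s A ∂Q = ∫ s, ρ s x ∂Q)
    -- the Markov chain `(M_n)` with transition function `ρ` and `M_0 ∼ Q`
    (Ω : Type*) [MeasurableSpace Ω] (P : Measure Ω) (hP : IsProbabilityMeasure P)
    (M : ℕ → Ω → ℝ)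
    (hMmeas : ∀ n : ℕ, Measurable (M n))
    (hM0 : P.map (M 0) = Q)
    (hMarkov : ∀ n : ℕ, ∀ x : ℝ,
      P[fun ω => (Set.Iic x).indicator (fun _ => (1 : ℝ)) (M (n + 1) ω) |
        ⨆ i ∈ Finset.range (n + 1), MeasurableSpace.comap (M i) Real.measurableSpace]
      =ᵐ[P] fun ω => ρ (M n ω) x)
    (β : ℝ) (hβ : β = ∫ s, ρ s A ∂Q) :
    (∀ n : ℕ, P {ω | (n : ℝ≥0∞) < hitTime M A ω} = ENNReal.ofReal (β ^ n)) ∧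
      (β < 1 → ∫⁻ ω, hitTime M A ω ∂P = ENNReal.ofReal (1 / (1 - β))) :=
  exit_time_geometric_from_invariant_initial_law_general ρ K hKsupp hρK hρmeas A hA Q hQprob hQsupp
    hInv Ω P hP M hMmeas hM0 hMarkov β hβ
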